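/- Let G_n be the set of binary words of length n with no two consecutive twos, and φ the map φ(1^{m_0} 2^{n_0} ⋯ 1^{m_d} 2^{n_d}) = 1^{m_d−1} 2^{n_0} 1^{m_{d−1}} 2^{n_1} ⋯ 2^{n_{d−2}} 1^{m_1} 2^{n_{d−1}} 1^{m_0+1} 2^{n_d}. Then φ(G_n) = G_n, and consequently Φ₂(G_n) = Ψ(G_n) = Γ(G_n); in particular (G_n, Φ₂(G_n)), (G_n, Ψ(G_n)) and (G_n, Γ(G_n)) are the same Eulerian pair. -/

import Mathlib

/-
A word without two consecutive 2s has descent blocks `1^{m₀} 2 1^{m₁} 2 ⋯ 2 1^{m_d} 2^t` with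
`m_i ≥ 1` for `i ≥ 1` and `t ≤ 1`, i.e. `n_j = 1` for `j < d` and `n_d = t`. On such words `φ`
only acts on `(m₀, …, m_d)`, as `(m_d - 1, m_{d-1}, …, m₁, m₀ + 1)`: an involution preserving
the shape and the length, so `φ(G_n) = G_n`. With all `n_j = 1` the defining formulas of `Φ₂`,
`Ψ` and `Γ` collapse, giving `Γ = Ψ` and, after rotating `2 (1^{a-1} 2) ⋯` into
`(2 1^{a-1}) ⋯ 2`, `Φ₂ = Ψ ∘ φ` on `G_n`. Finally `Φ₂(w) = 1^{m_d-1} 2 ⋯ 1^{m₁-1} 2 1^{m₀+d} 2^t`: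
its first `k` letters, `k` the number of 1s, contain exactly `d` letters 2, so
`exc Φ₂(w) = d = des w`; and it determines `(m₀, …, m_d; t)`, so `Φ₂` is injective on `G_n`.
-/

/-- Count the leading letters of a list equal to `a`; return the count and the rest. -/
def leadCount (a : ℕ) : List ℕ → ℕ × List ℕ
  | [] => (0, [])
  | b :: rest =>
    if b = a then
      let p := leadCount a rest
      (p.1 + 1, p.2)
    else (0, b :: rest)

def blocksAux : ℕ → List ℕ → List (ℕ × ℕ)
  | 0, _ => []
  | _, [] => []
  | fuel + 1, w =>
    let p := leadCount 1 w
    let q := leadCount 2 p.2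
    (p.1, q.1) :: blocksAux fuel q.2

/-- The descent-block decomposition `[(m₀,n₀),…,(m_d,n_d)]` of a binary word
`1^{m₀} 2^{n₀} ⋯ 1^{m_d} 2^{n_d}`. -/
def blocks (w : List ℕ) : List (ℕ × ℕ) := blocksAux w.length w

/-- The word `1^{m₀} 2^{n₀} ⋯ 1^{m_d} 2^{n_d}` determined by blocks. -/
def blockWord (bs : List (ℕ × ℕ)) : List ℕ :=
  bs.flatMap fun p => List.replicate p.1 1 ++ List.replicate p.2 2

/-- `[(m₀,n₀),…,(m_d,n_d)]` is a valid descent-block decomposition: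
`m_i > 0` for `1 ≤ i ≤ d` and `n_j > 0` for `0 ≤ j ≤ d-1`. -/
def ValidBlocks (bs : List (ℕ × ℕ)) : Prop :=
  bs ≠ [] ∧ (∀ p ∈ bs.tail, 0 < p.1) ∧ (∀ p ∈ bs.dropLast, 0 < p.2)

/-- A word on the alphabet {1,2}. -/
def IsBinary (w : List ℕ) : Prop := ∀ a ∈ w, a = 1 ∨ a = 2

/-- The descent number of a word. -/
def des (w : List ℕ) : ℕ := (w.zip w.tail).countP fun p => decide (p.2 < p.1)

/-- The excedance number of a binary word with `k` ones: the number of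
positions `i ≤ k` carrying the letter 2. -/
def exc (w : List ℕ) : ℕ := (w.take (w.count 1)).count 2

/-- `Ψ = Φ₁⁻¹` on binary words, via the descent-block decomposition. -/
def psiBlocks (bs : List (ℕ × ℕ)) : List ℕ :=
  List.replicate (bs.headD (0,0)).1 1
    ++ bs.tail.flatMap (fun p => 2 :: List.replicate (p.1 - 1) 1)
    ++ bs.dropLast.flatMap (fun p => List.replicate (p.2 - 1) 2 ++ [1])
    ++ List.replicate (bs.getLastD (0,0)).2 2

def Psi (w : List ℕ) : List ℕ := psiBlocks (blocks w)

/-- Foata's second fundamental transformation on binary words. -/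
def phi2Blocks (bs : List (ℕ × ℕ)) : List ℕ :=
  bs.tail.reverse.flatMap (fun p => List.replicate (p.1 - 1) 1 ++ [2])
    ++ List.replicate (bs.headD (0,0)).1 1
    ++ bs.dropLast.flatMap (fun p => List.replicate (p.2 - 1) 2 ++ [1])
    ++ List.replicate (bs.getLastD (0,0)).2 2

def Phi2 (w : List ℕ) : List ℕ := phi2Blocks (blocks w)

/-- The extended Steingrímsson map `Γ` on binary words. -/
def gammaBlocks (bs : List (ℕ × ℕ)) : List ℕ :=
  match bs with
  | [] => []
  | [(m0, n0)] => List.replicate m0 1 ++ List.replicate n0 2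
  | (m0, n0) :: rest =>
      List.replicate m0 1
        ++ rest.dropLast.flatMap (fun p => 2 :: List.replicate (p.1 - 1) 1)
        ++ (2 :: List.replicate (rest.getLastD (0,0)).1 1)
        ++ (let ns := n0 :: rest.map Prod.snd
            ns.dropLast.dropLast.flatMap (fun nj => List.replicate (nj - 1) 2 ++ [1])
              ++ List.replicate (ns.dropLast.getLastD 0 - 1 + ns.getLastD 0) 2)

def Gamma (w : List ℕ) : List ℕ := gammaBlocks (blocks w)

/-- The involution `φ` on binary words. -/
def phi (w : List ℕ) : List ℕ :=
  let bs := blocks w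
  let ns := bs.map Prod.snd
  let newms : List ℕ :=
    match (bs.map Prod.fst).reverse with
    | [] => []
    | [a] => [a]
    | a :: rest => (a - 1) :: (rest.dropLast ++ [rest.getLastD 0 + 1])
  blockWord (newms.zip ns)

/-- Fibonacci words: binary words with no two consecutive ones. -/
def IsFib (w : List ℕ) : Prop :=
  IsBinary w ∧ w.Chain' fun a b => ¬(a = 1 ∧ b = 1)

def FibSet (n : ℕ) : Set (List ℕ) := {w | IsFib w ∧ w.length = n}

/-- Fibonacci words of length `n` ending with the letter 1. -/
def FibSet' (n : ℕ) : Set (List ℕ) :=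
  {w | IsFib w ∧ w.length = n ∧ w.getLast? = some 1}

/-- Binary words of length `n` with no two consecutive twos. -/
def GSet (n : ℕ) : Set (List ℕ) :=
  {w | IsBinary w ∧ w.length = n ∧ w.Chain' fun a b => ¬(a = 2 ∧ b = 2)}

/-- The word `1^{m₀} 2^{d+n₀-1} 1 2^{n₁-1} ⋯ 1 2^{n_{d-1}-1} 1 2^{n_d}`. -/
def Rword (m0 : ℕ) (ns : List ℕ) : List ℕ :=
  match ns with
  | [] => List.replicate m0 1
  | [n0] => List.replicate m0 1 ++ List.replicate n0 2
  | n0 :: rest =>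
      List.replicate m0 1 ++ List.replicate (rest.length + n0 - 1) 2
        ++ rest.dropLast.flatMap (fun nj => 1 :: List.replicate (nj - 1) 2)
        ++ (1 :: List.replicate (rest.getLastD 0) 2)

def RSet (n : ℕ) : Set (List ℕ) :=
  {w | ∃ m0 ns, m0 ≤ 1 ∧ ns ≠ [] ∧ (∀ j ∈ List.dropLast ns, 1 ≤ j) ∧
        w = Rword m0 ns ∧ w.length = n}

/-- The Fibonacci word `1^{m₀} 2^{n₀} 1 2^{n₁} ⋯ 1 2^{n_d}`. -/
def Fword (m0 : ℕ) (ns : List ℕ) : List ℕ :=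
  List.replicate m0 1 ++ List.replicate (ns.headD 0) 2
    ++ ns.tail.flatMap fun nj => 1 :: List.replicate nj 2

namespace List

theorem zip_replicate_eq_map {α β : Type*} (l : List α) (b : β) :
    l.zip (replicate l.length b) = l.map (·, b) := by
  induction l with
  | nil => rfl
  | cons a l ih => simp [replicate_succ, ih]

theorem cons_replicate_append {α : Type*} (a : α) (n : ℕ) (l : List α) :
    a :: (replicate n a ++ l) = replicate n a ++ a :: l := by
  rw [← cons_append, ← replicate_succ, replicate_succ', append_assoc, singleton_append]

theorem cons_flatMap_append_singleton {α β : Type*} (x : β) (f : α → List β) (l : List α) :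
    x :: l.flatMap (fun a => f a ++ [x]) = l.flatMap (fun a => x :: f a) ++ [x] := by
  induction l with
  | nil => rfl
  | cons a l ih => simp [ih]

theorem replicate_append_cons_inj {α : Type*} {x y : α} (hxy : x ≠ y) {k k' : ℕ}
    {u u' : List α} (h : replicate k x ++ y :: u = replicate k' x ++ y :: u') :
    k = k' ∧ u = u' := by
  induction k generalizing k' with
  | zero => cases k' <;> simp_all [replicate_succ, eq_comm]
  | succ k ih =>
    cases k' with
    | zero => simp_all [replicate_succ]
    | succ k' => simpa using ih (by simpa [replicate_succ] using h)

theorem eq_of_map_sub_one_eq {l l' : List ℕ} (hl : ∀ m ∈ l, 1 ≤ m)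
    (hl' : ∀ m ∈ l', 1 ≤ m) (h : l.map (· - 1) = l'.map (· - 1)) : l = l' := by
  have key : ∀ l : List ℕ, (∀ m ∈ l, 1 ≤ m) → (l.map (· - 1)).map (· + 1) = l := by
    intro l hl
    rw [map_map]
    exact (map_congr_left fun m hm => Nat.sub_add_cancel (hl m hm)).trans (map_id' l)
  rw [← key l hl, ← key l' hl', h]

theorem head?_replicate_append_ne {α : Type*} {a x : α} {n : ℕ} {l : List α} (hx : x ≠ a)
    (hl : ∀ b ∈ l.head?, b ≠ a) :
    ∀ b ∈ (replicate n x ++ l).head?, b ≠ a := by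
  cases n with
  | zero => simpa using hl
  | succ n => simpa [replicate_succ] using hx

end List

theorem Set.sep_image_eq_image_sep {α β : Type*} {f : α → β} {s : Set α} {p : β → Prop}
    {q : α → Prop} (h : ∀ x ∈ s, p (f x) ↔ q x) :
    {y ∈ f '' s | p y} = f '' {x ∈ s | q x} := by
  ext y
  constructor
  · rintro ⟨⟨x, hx, rfl⟩, hp⟩
    exact ⟨x, ⟨hx, (h x hx).1 hp⟩, rfl⟩
  · rintro ⟨x, ⟨hx, hq⟩, rfl⟩
    exact ⟨⟨x, hx, rfl⟩, (h x hx).2 hq⟩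

section

open List

theorem leadCount_replicate_append {a k : ℕ} {w : List ℕ} (hw : ∀ b ∈ w.head?, b ≠ a) :
    leadCount a (replicate k a ++ w) = (k, w) := by
  induction k with
  | zero =>
    cases w with
    | nil => rfl
    | cons b w => simp [leadCount, hw b rfl]
  | succ k ih => simp [replicate_succ, leadCount, ih]

theorem blocksAux_succ {f : ℕ} {w : List ℕ} (hw : w ≠ []) :
    blocksAux (f + 1) w =
      ((leadCount 1 w).1, (leadCount 2 (leadCount 1 w).2).1)
        :: blocksAux f (leadCount 2 (leadCount 1 w).2).2 := by
  cases w with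
  | nil => exact absurd rfl hw
  | cons => rfl

theorem blockWord_cons (p : ℕ × ℕ) (bs : List (ℕ × ℕ)) :
    blockWord (p :: bs) = replicate p.1 1 ++ (replicate p.2 2 ++ blockWord bs) := by
  simp [blockWord]

theorem ValidBlocks.of_cons_cons {p q : ℕ × ℕ} {bs : List (ℕ × ℕ)}
    (h : ValidBlocks (p :: q :: bs)) : 0 < p.2 ∧ 0 < q.1 ∧ ValidBlocks (q :: bs) := by
  obtain ⟨-, hfst, hsnd⟩ := h
  simp only [tail_cons, mem_cons, forall_eq_or_imp, dropLast_cons_cons] at hfst hsnd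
  exact ⟨hsnd.1, hfst.1, cons_ne_nil _ _, hfst.2, hsnd.2⟩

theorem blocksAux_blockWord {bs : List (ℕ × ℕ)} (hv : ValidBlocks bs)
    (hne : blockWord bs ≠ []) {f : ℕ} (hf : (blockWord bs).length ≤ f) :
    blocksAux f (blockWord bs) = bs := by
  induction bs generalizing f with
  | nil => exact absurd rfl hv.1
  | cons p bs ih =>
    obtain ⟨f, rfl⟩ : ∃ f', f = f' + 1 :=
      Nat.exists_eq_add_one.mpr (lt_of_lt_of_le (length_pos_iff.mpr hne) hf)
    rw [blocksAux_succ hne, blockWord_cons] at *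
    cases bs with
    | nil =>
      rw [leadCount_replicate_append (head?_replicate_append_ne (by decide) (by simp [blockWord])),
        leadCount_replicate_append (by simp [blockWord])]
      cases f <;> rfl
    | cons q bs =>
      obtain ⟨hn, hm, hv'⟩ := ValidBlocks.of_cons_cons hv
      have hq : blockWord (q :: bs) =
          1 :: (replicate (q.1 - 1) 1 ++ (replicate q.2 2 ++ blockWord bs)) := by
        rw [blockWord_cons, ← cons_append, ← replicate_succ, Nat.sub_add_cancel hm]
      have hn' : replicate p.2 2 = 2 :: replicate (p.2 - 1) 2 := by
        rw [← replicate_succ, Nat.sub_add_cancel hn]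
      rw [leadCount_replicate_append (by simp [hn']), leadCount_replicate_append (by simp [hq])]
      simp only [length_append, length_replicate] at hf
      rw [ih hv' (by simp [hq]) (by omega)]

theorem blocks_blockWord {bs : List (ℕ × ℕ)} (hv : ValidBlocks bs)
    (hne : blockWord bs ≠ []) :
    blocks (blockWord bs) = bs :=
  blocksAux_blockWord hv hne le_rfl

theorem isBinary_blockWord (bs : List (ℕ × ℕ)) : IsBinary (blockWord bs) := by
  intro a ha
  simp only [blockWord, mem_flatMap, mem_append, mem_replicate] at ha
  obtain ⟨p, -, ⟨-, h⟩ | ⟨-, h⟩⟩ := ha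
  exacts [Or.inl h, Or.inr h]

theorem length_blockWord (bs : List (ℕ × ℕ)) :
    (blockWord bs).length = (bs.map Prod.fst).sum + (bs.map Prod.snd).sum := by
  induction bs with
  | nil => rfl
  | cons p bs ih =>
    simp only [blockWord_cons, length_append, length_replicate, ih, map_cons, sum_cons]
    omega

/-- The descent blocks of `1^{m₀} 2 1^{m₁} 2 ⋯ 2 1^{m_d} 2^t` for `ms = [m₀, …, m_d]`:
every `n_j` equals `1` except `n_d = t`. -/
def gBlocks (ms : List ℕ) (t : ℕ) : List (ℕ × ℕ) :=
  ms.zip (replicate (ms.length - 1) 1 ++ [t])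

def gWord (ms : List ℕ) (t : ℕ) : List ℕ := blockWord (gBlocks ms t)

structure GShape (ms : List ℕ) (t : ℕ) : Prop where
  ne_nil : ms ≠ []
  one_le : ∀ m ∈ ms.tail, 1 ≤ m
  le_one : t ≤ 1
  pos : 0 < ms.sum + t

variable {ms : List ℕ} {t : ℕ}

theorem GShape.of_cons {m m' : ℕ} (h : GShape (m :: m' :: ms) t) :
    GShape (m' :: ms) t where
  ne_nil := cons_ne_nil _ _
  one_le k hk := h.one_le k (mem_cons_of_mem _ hk)
  le_one := h.le_one
  pos := by have := h.one_le m' (by simp); simp only [sum_cons]; omega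

theorem GShape.eq_one_of_add_length_eq_zero {m₀ : ℕ}
    (h : GShape (m₀ :: ms) t) (h0 : m₀ + ms.length = 0) : t = 1 := by
  obtain ⟨rfl, rfl⟩ : m₀ = 0 ∧ ms = [] := by simpa using h0
  have := h.pos
  have := h.le_one
  simp only [sum_cons, sum_nil] at *
  omega

theorem gBlocks_singleton (m t : ℕ) : gBlocks [m] t = [(m, t)] := rfl

theorem gBlocks_cons (m t : ℕ) (hms : ms ≠ []) :
    gBlocks (m :: ms) t = (m, 1) :: gBlocks ms t := by
  obtain ⟨k, hk⟩ := Nat.exists_eq_add_one.mpr (length_pos_iff.mpr hms)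
  simp [gBlocks, hk, replicate_succ]

theorem gBlocks_append_singleton (ms : List ℕ) (m t : ℕ) :
    gBlocks (ms ++ [m]) t = ms.map (·, 1) ++ [(m, t)] := by
  rw [gBlocks, length_append, length_singleton, Nat.add_sub_cancel,
    zip_append (length_replicate ..).symm, zip_replicate_eq_map]
  rfl

theorem map_fst_gBlocks (ms : List ℕ) (t : ℕ) : (gBlocks ms t).map Prod.fst = ms :=
  map_fst_zip (by simp only [length_append, length_replicate, length_singleton]; omega)

theorem map_snd_gBlocks (t : ℕ) (hms : ms ≠ []) :
    (gBlocks ms t).map Prod.snd = replicate (ms.length - 1) 1 ++ [t] :=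
  map_snd_zip (by
    have := length_pos_iff.mpr hms
    simp only [length_append, length_replicate, length_singleton]
    omega)

theorem gWord_singleton (m t : ℕ) : gWord [m] t = replicate m 1 ++ replicate t 2 := by
  simp [gWord, gBlocks_singleton, blockWord]

theorem gWord_cons (m t : ℕ) (hms : ms ≠ []) :
    gWord (m :: ms) t = replicate m 1 ++ 2 :: gWord ms t := by
  rw [gWord, gBlocks_cons m t hms, blockWord_cons]
  rfl

theorem gWord_succ_cons (m : ℕ) (ms : List ℕ) (t : ℕ) :
    gWord ((m + 1) :: ms) t = 1 :: gWord (m :: ms) t := by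
  rcases eq_or_ne ms [] with rfl | hms
  · simp [gWord_singleton, replicate_succ]
  · simp [gWord_cons _ _ hms, replicate_succ]

theorem gWord_append_singleton (ms : List ℕ) (m t : ℕ) :
    gWord (ms ++ [m]) t =
      ms.flatMap (fun k => replicate k 1 ++ [2]) ++ replicate m 1 ++ replicate t 2 := by
  simp [gWord, gBlocks_append_singleton, blockWord, flatMap_map]

theorem length_gWord (t : ℕ) (hms : ms ≠ []) :
    (gWord ms t).length = ms.sum + (ms.length - 1) + t := by
  rw [gWord, length_blockWord, map_fst_gBlocks, map_snd_gBlocks t hms]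
  simp [Nat.add_assoc]

theorem GShape.validBlocks (h : GShape ms t) :
    ValidBlocks (gBlocks ms t) := by
  refine ⟨fun h0 => h.ne_nil ?_, fun p hp => h.one_le p.1 ?_, fun p hp => ?_⟩
  · rw [← map_fst_gBlocks ms t, h0, map_nil]
  · rw [← map_fst_gBlocks ms t, ← map_tail]
    exact mem_map_of_mem hp
  · have : p.2 ∈ (gBlocks ms t).dropLast.map Prod.snd := mem_map_of_mem hp
    rw [map_dropLast, map_snd_gBlocks t h.ne_nil, dropLast_concat] at this
    rw [eq_of_mem_replicate this]
    exact Nat.one_pos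

theorem GShape.gWord_ne_nil (h : GShape ms t) : gWord ms t ≠ [] := by
  rw [← length_pos_iff, length_gWord t h.ne_nil]
  exact Nat.lt_of_lt_of_le h.pos (by omega)

theorem blocks_gWord (h : GShape ms t) :
    blocks (gWord ms t) = gBlocks ms t :=
  blocks_blockWord h.validBlocks h.gWord_ne_nil

theorem head?_gWord_zero_cons (h : GShape (0 :: ms) t) :
    (gWord (0 :: ms) t).head? = some 2 := by
  rcases eq_or_ne ms [] with rfl | hms
  · simp [gWord_singleton, h.eq_one_of_add_length_eq_zero rfl]
  · simp [gWord_cons _ _ hms]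

theorem isChain_replicate_one_append {m : ℕ} {l : List ℕ}
    (hl : l.IsChain fun a b => ¬(a = 2 ∧ b = 2)) :
    (replicate m 1 ++ l).IsChain fun a b => ¬(a = 2 ∧ b = 2) := by
  induction m with
  | zero => exact hl
  | succ m ih => exact ih.cons fun _ _ h => absurd h.1 (by decide)

theorem GShape.isChain_gWord (h : GShape ms t) :
    (gWord ms t).IsChain fun a b => ¬(a = 2 ∧ b = 2) := by
  induction ms with
  | nil => exact absurd rfl h.ne_nil
  | cons m ms ih =>
    rcases ms with _ | ⟨m', ms⟩
    · rw [gWord_singleton]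
      apply isChain_replicate_one_append
      have := h.le_one
      interval_cases t <;> simp
    · obtain ⟨k, rfl⟩ := Nat.exists_eq_add_one.mpr (h.one_le m' (by simp))
      rw [gWord_cons _ _ (cons_ne_nil _ _), gWord_succ_cons]
      apply isChain_replicate_one_append
      rw [← gWord_succ_cons]
      exact (ih h.of_cons).cons (by simp [gWord_succ_cons])

theorem GShape.gWord_mem_GSet (h : GShape ms t) :
    gWord ms t ∈ GSet (gWord ms t).length :=
  ⟨isBinary_blockWord _, rfl, h.isChain_gWord⟩

theorem eq_nil_or_exists_gShape_of_mem_GSet {n : ℕ} {w : List ℕ} (hw : w ∈ GSet n) :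
    w = [] ∨ ∃ ms t, GShape ms t ∧ w = gWord ms t := by
  obtain ⟨hb, -, hc⟩ := hw
  induction w with
  | nil => exact Or.inl rfl
  | cons a w ih =>
    right
    have ih := ih (fun b hb' => hb b (mem_cons_of_mem _ hb')) hc.tail
    rcases hb a mem_cons_self with rfl | rfl
    · rcases ih with rfl | ⟨_ | ⟨m, ms⟩, t, hs, rfl⟩
      · exact ⟨[1], 0, ⟨by simp, by simp, by simp, by simp⟩, by simp [gWord_singleton]⟩
      · exact absurd rfl hs.ne_nil
      · exact ⟨(m + 1) :: ms, t, ⟨by simp, hs.one_le, hs.le_one, by simp⟩,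
          (gWord_succ_cons m ms t).symm⟩
    · rcases ih with rfl | ⟨_ | ⟨m, ms⟩, t, hs, rfl⟩
      · exact ⟨[0], 1, ⟨by simp, by simp, by simp, by simp⟩, by simp [gWord_singleton]⟩
      · exact absurd rfl hs.ne_nil
      · have hm : m ≠ 0 := by
          rintro rfl
          have := hc.rel_head? (head?_gWord_zero_cons hs)
          simp at this
        refine ⟨0 :: m :: ms, t,
          ⟨by simp, ?_, hs.le_one, by simp only [sum_cons]; omega⟩, ?_⟩
        · simpa [Nat.one_le_iff_ne_zero, hm] using hs.one_le
        · simp [gWord_cons _ _ (cons_ne_nil m ms)]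

def phiData (ms : List ℕ) : List ℕ :=
  match ms.reverse with
  | [] => []
  | [a] => [a]
  | a :: rest => (a - 1) :: (rest.dropLast ++ [rest.getLastD 0 + 1])

theorem phi_eq (w : List ℕ) :
    phi w = blockWord ((phiData ((blocks w).map Prod.fst)).zip ((blocks w).map Prod.snd)) := rfl

theorem phiData_singleton (m : ℕ) : phiData [m] = [m] := rfl

theorem phiData_cons_append (m₀ : ℕ) (ms : List ℕ) (m : ℕ) :
    phiData (m₀ :: (ms ++ [m])) = (m - 1) :: (ms.reverse ++ [m₀ + 1]) := by
  rw [phiData, show (m₀ :: (ms ++ [m])).reverse = m :: (ms.reverse ++ [m₀]) by simp]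
  obtain ⟨c, cs, hc⟩ := exists_cons_of_ne_nil (append_ne_nil_of_right_ne_nil ms.reverse
    (cons_ne_nil m₀ []))
  simp only [hc]
  rw [← hc, dropLast_concat, getLastD_concat]

theorem length_phiData (ms : List ℕ) : (phiData ms).length = ms.length := by
  induction ms using List.bidirectionalRec with
  | nil | singleton => rfl
  | cons_append m₀ ms m => simp [phiData_cons_append]

theorem sum_phiData (h : ∀ m ∈ ms.tail, 1 ≤ m) :
    (phiData ms).sum = ms.sum := by
  induction ms using List.bidirectionalRec with
  | nil | singleton => rfl
  | cons_append m₀ ms m =>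
    have := h m (by simp)
    simp only [phiData_cons_append, sum_cons, sum_append, sum_reverse, sum_nil]
    omega

theorem one_le_of_mem_tail_phiData (h : ∀ m ∈ ms.tail, 1 ≤ m) :
    ∀ m ∈ (phiData ms).tail, 1 ≤ m := by
  induction ms using List.bidirectionalRec with
  | nil | singleton => exact h
  | cons_append m₀ ms m =>
    simp only [phiData_cons_append, tail_cons, mem_append, mem_reverse, mem_singleton]
    rintro k (hk | rfl)
    · exact h k (by simp [hk])
    · exact Nat.le_add_left 1 m₀

theorem phiData_phiData (h : ∀ m ∈ ms.tail, 1 ≤ m) :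
    phiData (phiData ms) = ms := by
  induction ms using List.bidirectionalRec with
  | nil | singleton => rfl
  | cons_append m₀ ms m =>
    simp [phiData_cons_append, Nat.sub_add_cancel (h m (by simp))]

theorem gShape_phiData (h : GShape ms t) : GShape (phiData ms) t where
  ne_nil := ne_nil_of_length_pos (by rw [length_phiData]; exact length_pos_iff.mpr h.ne_nil)
  one_le := one_le_of_mem_tail_phiData h.one_le
  le_one := h.le_one
  pos := by rw [sum_phiData h.one_le]; exact h.pos

theorem GShape.phi_gWord (h : GShape ms t) :
    phi (gWord ms t) = gWord (phiData ms) t := by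
  rw [phi_eq, blocks_gWord h, map_fst_gBlocks, map_snd_gBlocks t h.ne_nil, gWord, gBlocks,
    length_phiData]

theorem mapsTo_phi_GSet (n : ℕ) : Set.MapsTo phi (GSet n) (GSet n) := by
  intro w hw
  rcases eq_nil_or_exists_gShape_of_mem_GSet hw with rfl | ⟨ms, t, hs, rfl⟩
  · exact hw
  · rw [hs.phi_gWord]
    convert (gShape_phiData hs).gWord_mem_GSet using 1
    rw [← hw.2.1, length_gWord t hs.ne_nil, length_gWord t (gShape_phiData hs).ne_nil,
      length_phiData, sum_phiData hs.one_le]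

theorem leftInvOn_phi_GSet (n : ℕ) : Set.LeftInvOn phi phi (GSet n) := by
  intro w hw
  rcases eq_nil_or_exists_gShape_of_mem_GSet hw with rfl | ⟨ms, t, hs, rfl⟩
  · rfl
  · rw [hs.phi_gWord, (gShape_phiData hs).phi_gWord, phiData_phiData hs.one_le]

theorem image_phi_GSet (n : ℕ) : phi '' GSet n = GSet n :=
  (Set.InvOn.bijOn ⟨leftInvOn_phi_GSet n, leftInvOn_phi_GSet n⟩ (mapsTo_phi_GSet n)
    (mapsTo_phi_GSet n)).image_eq

theorem GShape.Phi2_gWord {m₀ : ℕ} (h : GShape (m₀ :: ms) t) :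
    Phi2 (gWord (m₀ :: ms) t) = gWord (ms.reverse.map (· - 1) ++ [m₀ + ms.length]) t := by
  rw [Phi2, blocks_gWord h, phi2Blocks, gWord_append_singleton, flatMap_map]
  rcases eq_nil_or_concat' ms with rfl | ⟨ms, m, rfl⟩
  · simp [gBlocks_singleton]
  · rw [← cons_append, gBlocks_append_singleton, dropLast_concat, getLastD_concat, map_cons,
      cons_append, tail_cons, headD_cons]
    simp [← map_reverse, flatMap_def, Function.comp_def, map_const', replicate_succ,
      replicate_add]

theorem GShape.Psi_gWord {m₀ : ℕ} (h : GShape (m₀ :: ms) t) :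
    Psi (gWord (m₀ :: ms) t) =
      replicate m₀ 1 ++ ms.flatMap (fun m => 2 :: replicate (m - 1) 1)
        ++ replicate ms.length 1 ++ replicate t 2 := by
  rw [Psi, blocks_gWord h, psiBlocks]
  rcases eq_nil_or_concat' ms with rfl | ⟨ms, m, rfl⟩
  · simp [gBlocks_singleton]
  · rw [← cons_append, gBlocks_append_singleton, dropLast_concat, getLastD_concat, map_cons,
      cons_append, tail_cons, headD_cons]
    simp [flatMap_def, Function.comp_def, map_const', replicate_succ]

theorem GShape.Phi2_gWord_eq_Psi_gWord_phiData (h : GShape ms t) :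
    Phi2 (gWord ms t) = Psi (gWord (phiData ms) t) := by
  induction ms using List.bidirectionalRec with
  | nil => exact absurd rfl h.ne_nil
  | singleton m =>
    rw [phiData_singleton, h.Phi2_gWord, h.Psi_gWord]
    simp [gWord_singleton]
  | cons_append m₀ ms m =>
    have h' := gShape_phiData h
    rw [phiData_cons_append] at h' ⊢
    rw [h.Phi2_gWord, h'.Psi_gWord, gWord_append_singleton, flatMap_map]
    simp only [reverse_append, reverse_cons, reverse_nil, nil_append, cons_append, flatMap_cons,
      append_assoc, length_append, length_cons, length_nil, zero_add, replicate_append_replicate,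
      flatMap_append, add_tsub_cancel_right, flatMap_nil, append_nil, length_reverse,
      append_cancel_left_eq]
    rw [← cons_append, cons_flatMap_append_singleton, append_assoc, singleton_append]

theorem gammaBlocks_cons_of_ne_nil (m₀ n₀ : ℕ) {bs : List (ℕ × ℕ)} (hbs : bs ≠ []) :
    gammaBlocks ((m₀, n₀) :: bs) =
      replicate m₀ 1
        ++ bs.dropLast.flatMap (fun p => 2 :: replicate (p.1 - 1) 1)
        ++ (2 :: replicate (bs.getLastD (0,0)).1 1)
        ++ (let ns := n₀ :: bs.map Prod.snd
            ns.dropLast.dropLast.flatMap (fun nj => replicate (nj - 1) 2 ++ [1])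
              ++ replicate (ns.dropLast.getLastD 0 - 1 + ns.getLastD 0) 2) := by
  cases bs with
  | nil => exact absurd rfl hbs
  | cons => rfl

theorem GShape.Gamma_gWord_eq_Psi_gWord (h : GShape ms t) :
    Gamma (gWord ms t) = Psi (gWord ms t) := by
  rw [Gamma, blocks_gWord h]
  induction ms using List.bidirectionalRec with
  | nil => exact absurd rfl h.ne_nil
  | singleton m => simp [gBlocks_singleton, gammaBlocks, h.Psi_gWord]
  | cons_append m₀ ms m =>
    rw [h.Psi_gWord, ← cons_append, gBlocks_append_singleton, map_cons, cons_append,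
      gammaBlocks_cons_of_ne_nil _ _ (by simp)]
    have hns : 1 :: (ms.map (·, 1) ++ [(m, t)]).map Prod.snd =
        replicate (ms.length + 1) 1 ++ [t] := by
      simp [replicate_succ, Function.comp_def, map_const']
    obtain ⟨k, rfl⟩ := Nat.exists_eq_add_one.mpr (h.one_le m (by simp))
    simp only [hns, dropLast_concat, getLastD_concat, dropLast_replicate]
    simp [replicate_succ', flatMap_def, Function.comp_def, cons_replicate_append]

theorem Phi2_eq_Psi_phi_of_mem_GSet {n : ℕ} {w : List ℕ} (hw : w ∈ GSet n) :
    Phi2 w = Psi (phi w) := by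
  rcases eq_nil_or_exists_gShape_of_mem_GSet hw with rfl | ⟨ms, t, hs, rfl⟩
  · rfl
  · rw [hs.phi_gWord, hs.Phi2_gWord_eq_Psi_gWord_phiData]

theorem Gamma_eq_Psi_of_mem_GSet {n : ℕ} {w : List ℕ} (hw : w ∈ GSet n) :
    Gamma w = Psi w := by
  rcases eq_nil_or_exists_gShape_of_mem_GSet hw with rfl | ⟨ms, t, hs, rfl⟩
  · rfl
  · exact hs.Gamma_gWord_eq_Psi_gWord

theorem des_cons_cons (a b : ℕ) (l : List ℕ) :
    des (a :: b :: l) = des (b :: l) + if b < a then 1 else 0 := by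
  simp [des, countP_cons]

theorem des_cons_of_le_head {a : ℕ} {l : List ℕ} (hl : ∀ b ∈ l.head?, a ≤ b) :
    des (a :: l) = des l := by
  cases l with
  | nil => rfl
  | cons b l => rw [des_cons_cons, if_neg (not_lt.mpr (hl b rfl)), Nat.add_zero]

theorem des_replicate_append {a n : ℕ} {l : List ℕ} (hl : ∀ b ∈ l.head?, a ≤ b) :
    des (replicate n a ++ l) = des l := by
  induction n with
  | zero => rfl
  | succ n ih =>
    rw [replicate_succ, cons_append, des_cons_of_le_head, ih]
    cases n with
    | zero => simpa using hl
    | succ n => simp [replicate_succ]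

theorem GShape.des_gWord (h : GShape ms t) :
    des (gWord ms t) = ms.length - 1 := by
  induction ms with
  | nil => exact absurd rfl h.ne_nil
  | cons m ms ih =>
    rcases ms with _ | ⟨m', ms⟩
    · rw [gWord_singleton, des_replicate_append (by cases t <;> simp [replicate_succ]),
        ← append_nil (replicate t 2), des_replicate_append (by simp)]
      rfl
    · obtain ⟨k, rfl⟩ := Nat.exists_eq_add_one.mpr (h.one_le m' (by simp))
      rw [gWord_cons _ _ (cons_ne_nil _ _), des_replicate_append (by simp), gWord_succ_cons,
        des_cons_cons, ← gWord_succ_cons, ih h.of_cons]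
      simp

theorem exc_gWord_append_singleton (ks : List ℕ) (a t : ℕ) :
    exc (gWord (ks ++ [a + ks.length]) t) = ks.length := by
  set pre := ks.flatMap (fun k => replicate k 1 ++ [2]) ++ replicate a 1
  have hpre : (gWord (ks ++ [a + ks.length]) t).count 1 = pre.length := by
    simp [pre, gWord_append_singleton, count_flatMap, count_replicate, Function.comp_def,
      Nat.add_comm a, Nat.add_assoc]
  rw [exc, hpre, gWord_append_singleton, replicate_add, ← append_assoc, append_assoc pre,
    take_left]
  simp [pre, count_flatMap, count_replicate, Function.comp_def]

theorem exc_Phi2_of_mem_GSet {n : ℕ} {w : List ℕ} (hw : w ∈ GSet n) :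
    exc (Phi2 w) = des w := by
  rcases eq_nil_or_exists_gShape_of_mem_GSet hw with rfl | ⟨_ | ⟨m₀, ms⟩, t, hs, rfl⟩
  · rfl
  · exact absurd rfl hs.ne_nil
  · rw [hs.Phi2_gWord, hs.des_gWord, ← length_reverse (as := ms), ← length_map (f := (· - 1)),
      exc_gWord_append_singleton]
    simp

theorem flatMap_append_replicate_inj {ks ks' : List ℕ} {x x' : ℕ}
    (h : ks.flatMap (fun k => replicate k 1 ++ [2]) ++ replicate x 1 =
      ks'.flatMap (fun k => replicate k 1 ++ [2]) ++ replicate x' 1) : ks = ks' ∧ x = x' := by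
  induction ks generalizing ks' with
  | nil =>
    cases ks' with
    | nil => simpa using congrArg length h
    | cons k' ks' =>
      have : (2 : ℕ) ∈ replicate x 1 := by
        simp only [flatMap_nil, nil_append] at h
        simp [h]
      simp at this
  | cons k ks ih =>
    cases ks' with
    | nil =>
      have : (2 : ℕ) ∈ replicate x' 1 := by
        simp only [flatMap_nil, nil_append] at h
        simp [← h]
      simp at this
    | cons k' ks' =>
      simp only [flatMap_cons, append_assoc, cons_append, nil_append] at h
      obtain ⟨rfl, hrest⟩ := replicate_append_cons_inj (by decide) h
      obtain ⟨rfl, rfl⟩ := ih hrest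
      exact ⟨rfl, rfl⟩

theorem getLast?_gWord_append_singleton {ks : List ℕ} {x t : ℕ} (ht : t ≤ 1)
    (hx : x = 0 → t = 1) :
    (gWord (ks ++ [x]) t).getLast? = some (t + 1) := by
  rw [gWord_append_singleton]
  interval_cases t
  · obtain ⟨x, rfl⟩ := Nat.exists_eq_add_one.mpr (Nat.pos_of_ne_zero (by simpa using hx))
    simp [replicate_succ']
  · simp

theorem gWord_append_singleton_inj {ks ks' : List ℕ} {x x' t t' : ℕ} (ht : t ≤ 1)
    (ht' : t' ≤ 1) (hx : x = 0 → t = 1) (hx' : x' = 0 → t' = 1)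
    (h : gWord (ks ++ [x]) t = gWord (ks' ++ [x']) t') :
    ks = ks' ∧ x = x' ∧ t = t' := by
  have htt : t = t' := by
    simpa using (getLast?_gWord_append_singleton ht hx).symm.trans
      ((congrArg getLast? h).trans (getLast?_gWord_append_singleton ht' hx'))
  subst htt
  rw [gWord_append_singleton, gWord_append_singleton] at h
  exact ⟨(flatMap_append_replicate_inj (append_cancel_right h)).1,
    (flatMap_append_replicate_inj (append_cancel_right h)).2, rfl⟩

theorem GShape.getLast?_Phi2_gWord (h : GShape ms t) :
    (Phi2 (gWord ms t)).getLast? = some (t + 1) := by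
  obtain ⟨m₀, ms, rfl⟩ := exists_cons_of_ne_nil h.ne_nil
  rw [h.Phi2_gWord]
  exact getLast?_gWord_append_singleton h.le_one h.eq_one_of_add_length_eq_zero

theorem GShape.Phi2_gWord_inj {ms ms' : List ℕ} {t t' : ℕ} (h : GShape ms t)
    (h' : GShape ms' t') (heq : Phi2 (gWord ms t) = Phi2 (gWord ms' t')) : ms = ms' ∧ t = t' := by
  obtain ⟨m₀, ms, rfl⟩ := exists_cons_of_ne_nil h.ne_nil
  obtain ⟨m₀', ms', rfl⟩ := exists_cons_of_ne_nil h'.ne_nil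
  rw [h.Phi2_gWord, h'.Phi2_gWord] at heq
  obtain ⟨hks, hx, rfl⟩ :=
    gWord_append_singleton_inj h.le_one h'.le_one h.eq_one_of_add_length_eq_zero
      h'.eq_one_of_add_length_eq_zero heq
  obtain rfl : ms = ms' := reverse_injective <| eq_of_map_sub_one_eq
    (fun m hm => h.one_le m (mem_reverse.mp hm)) (fun m hm => h'.one_le m (mem_reverse.mp hm)) hks
  exact ⟨by rw [Nat.add_right_cancel hx], rfl⟩

theorem Phi2_nil : Phi2 [] = [] := rfl

theorem injOn_Phi2_GSet (n : ℕ) : Set.InjOn Phi2 (GSet n) := by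
  intro w hw w' hw' heq
  rcases eq_nil_or_exists_gShape_of_mem_GSet hw with rfl | ⟨ms, t, hs, rfl⟩ <;>
    rcases eq_nil_or_exists_gShape_of_mem_GSet hw' with rfl | ⟨ms', t', hs', rfl⟩
  · rfl
  · exact absurd (congrArg getLast? heq) (by simp [Phi2_nil, hs'.getLast?_Phi2_gWord])
  · exact absurd (congrArg getLast? heq) (by simp [Phi2_nil, hs.getLast?_Phi2_gWord])
  · obtain ⟨rfl, rfl⟩ := hs.Phi2_gWord_inj hs' heq
    rfl

end

theorem stmt_17 (n : ℕ) :
    phi '' GSet n = GSet n ∧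
      Phi2 '' GSet n = Psi '' GSet n ∧ Psi '' GSet n = Gamma '' GSet n ∧
      ∀ k, {w ∈ GSet n | des w = k}.ncard =
        {w ∈ Phi2 '' GSet n | exc w = k}.ncard := by
  refine ⟨image_phi_GSet n, ?_, ?_, fun k => ?_⟩
  · rw [Set.image_congr fun w hw => Phi2_eq_Psi_phi_of_mem_GSet hw, ← Set.image_image,
      image_phi_GSet]
  · exact Set.image_congr fun w hw => (Gamma_eq_Psi_of_mem_GSet hw).symm
  · rw [Set.sep_image_eq_image_sep (q := fun w => des w = k)
        fun w hw => by rw [exc_Phi2_of_mem_GSet hw],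
      ((injOn_Phi2_GSet n).mono (Set.sep_subset _ _)).ncard_image]
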